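/- Under the partially coherent measurement model y_p = e^{iφ_p} Σ_{k∈Λ} x_k A_p(:,k) + w_p with unit-norm real columns A_p(:,j), noise bound |A_p(:,i)^T w_p| < ζ for all i,p, coherence μ_p, sparsity K = |Λ| ≥ 1, and |x_max| = max_{k∈Λ}|x_k|, it holds that max_{i∈Λ} Σ_{p=1}^P |A_p(:,i)^T y_p| ≥ P|x_max| − Pζ − (K−1)(Σ_{p=1}^P μ_p)|x_max|. -/

import Mathlib

open Complex Finset
open scoped Matrix

/-!
Correlating the observation with an on-support column `i` of maximal `‖x i‖` gives, up to the
unit phase `exp (φ p * I)`, the coefficient `x i` (the column has unit norm) plus `K - 1`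
interference terms `x k ⟪A(:,i), A(:,k)⟫`, each of size at most `μ_p |x_max|`, plus a noise
correlation of size below `ζ`. The reverse triangle inequality bounds each snapshot from below,
and summing over `p` and passing to the maximum over `Λ` gives the bound.
-/

section Correlation

variable {m n : Type*} [Fintype m]

lemma sum_col_mul_sum_eq_add_sum_erase_gram [DecidableEq n] (A : Matrix m n ℝ) (Λ : Finset n)
    (x : n → ℂ) {i : n} (hi : i ∈ Λ) (hcol : ∑ r, A r i ^ 2 = 1) :
    ∑ r, (A r i : ℂ) * ∑ k ∈ Λ, x k * A r k =
      x i + ∑ k ∈ Λ.erase i, x k * ((Aᵀ * A) i k : ℝ) := by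
  have hdiag : (Aᵀ * A) i i = 1 := by
    simpa only [Matrix.mul_apply, Matrix.transpose_apply, sq] using hcol
  calc ∑ r, (A r i : ℂ) * ∑ k ∈ Λ, x k * A r k
      = ∑ k ∈ Λ, x k * ((Aᵀ * A) i k : ℝ) := by
        simp only [Matrix.mul_apply, Matrix.transpose_apply, ofReal_sum, ofReal_mul,
          Finset.mul_sum]
        rw [Finset.sum_comm]
        exact Finset.sum_congr rfl fun k _ => Finset.sum_congr rfl fun r _ => by ring
    _ = x i + ∑ k ∈ Λ.erase i, x k * ((Aᵀ * A) i k : ℝ) := by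
        rw [← Finset.add_sum_erase _ _ hi, hdiag, ofReal_one, mul_one]

lemma norm_sum_mul_ofReal_le (s : Finset n) (x : n → ℂ) (g : n → ℝ) {B μ : ℝ}
    (hx : ∀ k ∈ s, ‖x k‖ ≤ B) (hg : ∀ k ∈ s, |g k| ≤ μ) :
    ‖∑ k ∈ s, x k * (g k : ℂ)‖ ≤ #s * (B * μ) := by
  calc ‖∑ k ∈ s, x k * (g k : ℂ)‖ ≤ ∑ k ∈ s, ‖x k * (g k : ℂ)‖ := norm_sum_le _ _
    _ ≤ #s • (B * μ) := Finset.sum_le_card_nsmul _ _ _ fun k hk => by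
        rw [norm_mul, norm_real, Real.norm_eq_abs]
        exact mul_le_mul (hx k hk) (hg k hk) (abs_nonneg _) ((norm_nonneg _).trans (hx k hk))
    _ = #s * (B * μ) := nsmul_eq_mul _ _

lemma norm_sub_sub_le_norm_correlation [DecidableEq n] (A : Matrix m n ℝ) (Λ : Finset n) (x : n → ℂ)
    (w : m → ℂ) {c : ℂ} (hc : ‖c‖ = 1) {i : n} (hi : i ∈ Λ) (hcol : ∑ r, A r i ^ 2 = 1)
    {B μ : ℝ} (hB : ∀ k ∈ Λ, ‖x k‖ ≤ B) (hμ : ∀ k, k ≠ i → |(Aᵀ * A) i k| ≤ μ) :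
    ‖x i‖ - (#Λ - 1) * (B * μ) - ‖∑ r, (A r i : ℂ) * w r‖ ≤
      ‖∑ r, (A r i : ℂ) * (c * ∑ k ∈ Λ, x k * A r k + w r)‖ := by
  set S := ∑ k ∈ Λ.erase i, x k * ((Aᵀ * A) i k : ℝ)
  have hcorr : ∑ r, (A r i : ℂ) * (c * ∑ k ∈ Λ, x k * A r k + w r) =
      c * (x i + S) + ∑ r, (A r i : ℂ) * w r := by
    simp only [mul_add, Finset.sum_add_distrib, mul_left_comm _ c, ← Finset.mul_sum,
      sum_col_mul_sum_eq_add_sum_erase_gram A Λ x hi hcol, S]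
  have hcard : (#(Λ.erase i) : ℝ) = #Λ - 1 := by
    rw [← Finset.card_erase_add_one hi, Nat.cast_add_one, add_sub_cancel_right]
  have hS : ‖S‖ ≤ (#Λ - 1) * (B * μ) := hcard ▸ norm_sum_mul_ofReal_le _ _ _
    (fun k hk => hB k (Finset.mem_of_mem_erase hk))
    (fun k hk => hμ k (Finset.ne_of_mem_erase hk))
  calc ‖x i‖ - (#Λ - 1) * (B * μ) - ‖∑ r, (A r i : ℂ) * w r‖
      ≤ ‖c * (x i + S)‖ - ‖∑ r, (A r i : ℂ) * w r‖ := by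
        rw [norm_mul, hc, one_mul]
        linarith [norm_sub_le_norm_add (x i) S]
    _ ≤ _ := hcorr ▸ norm_sub_le_norm_add _ _

end Correlation

theorem on_support_correlation_bound_general
    {M N P K : ℕ} (A : Fin P → Matrix (Fin M) (Fin N) ℝ)
    (Λ : Finset (Fin N)) (hΛ : Λ.Nonempty) (hK : Λ.card = K)
    (x : Fin N → ℂ) (φ : Fin P → ℝ)
    (w : Fin P → Fin M → ℂ) (y : Fin P → Fin M → ℂ)
    (μ : Fin P → ℝ) (ζ : ℝ)
    (hcols : ∀ p j, ∑ m, (A p m j) ^ 2 = 1)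
    (hμ : ∀ p, ∀ i j, i ≠ j → |∑ m, A p m i * A p m j| ≤ μ p)
    (hy : ∀ p m, y p m =
      Complex.exp (φ p * Complex.I) * (∑ k ∈ Λ, x k * (A p m k : ℂ)) + w p m)
    (hw : ∀ p, ∀ i : Fin N, ‖∑ m, (A p m i : ℂ) * w p m‖ < ζ) :
    Λ.sup' hΛ (fun i => ∑ p, ‖∑ m, (A p m i : ℂ) * y p m‖) ≥
      (P : ℝ) * (Λ.sup' hΛ fun k => ‖x k‖) - (P : ℝ) * ζ -
        ((K : ℝ) - 1) * (∑ p, μ p) * (Λ.sup' hΛ fun k => ‖x k‖) := by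
  set xmax := Λ.sup' hΛ fun k => ‖x k‖
  obtain ⟨i, hi, hxi⟩ := Finset.exists_mem_eq_sup' hΛ fun k => ‖x k‖
  have hsnapshot : ∀ p, xmax - (K - 1) * (xmax * μ p) - ζ ≤ ‖∑ m, (A p m i : ℂ) * y p m‖ := by
    intro p
    have hbound := norm_sub_sub_le_norm_correlation (A p) Λ x (w p) (norm_exp_ofReal_mul_I (φ p)) hi
      (hcols p i) (B := xmax) (fun k hk => Finset.le_sup' (fun k => ‖x k‖) hk)
      (fun k hk => by simpa only [Matrix.mul_apply, Matrix.transpose_apply] using hμ p i k hk.symm)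
    rw [hK, ← hxi] at hbound
    simp only [hy]
    linarith [hw p i]
  calc (P : ℝ) * xmax - P * ζ - (K - 1) * (∑ p, μ p) * xmax
      = ∑ p, (xmax - (K - 1) * (xmax * μ p) - ζ) := by
        simp only [Finset.sum_sub_distrib, ← Finset.mul_sum, Finset.sum_const, Finset.card_univ,
          Fintype.card_fin, nsmul_eq_mul]
        ring
    _ ≤ ∑ p, ‖∑ m, (A p m i : ℂ) * y p m‖ := Finset.sum_le_sum fun p _ => hsnapshot p
    _ ≤ _ := Finset.le_sup' (fun j => ∑ p, ‖∑ m, (A p m j : ℂ) * y p m‖) hi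

/-- On-support correlation lower bound (eq. (15)): in the partially coherent
model with sparsity `K = |Λ| ≥ 1`,
`max_{i∈Λ} Σ_p |A_p(:,i)^T y_p| ≥ P|x_max| − Pζ − (K−1)(Σ_p μ_p)|x_max|`. -/
theorem on_support_correlation_bound
    {M N P K : ℕ} (A : Fin P → Matrix (Fin M) (Fin N) ℝ)
    (Λ : Finset (Fin N)) (hΛ : Λ.Nonempty) (hK : Λ.card = K) (hK1 : 1 ≤ K)
    (x : Fin N → ℂ) (φ : Fin P → ℝ)
    (w : Fin P → Fin M → ℂ) (y : Fin P → Fin M → ℂ)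
    (μ : Fin P → ℝ) (ζ : ℝ)
    (hcols : ∀ p j, ∑ m, (A p m j) ^ 2 = 1)
    (hμ : ∀ p, ∀ i j, i ≠ j → |∑ m, A p m i * A p m j| ≤ μ p)
    (hy : ∀ p m, y p m =
      Complex.exp (φ p * Complex.I) * (∑ k ∈ Λ, x k * (A p m k : ℂ)) + w p m)
    (hw : ∀ p, ∀ i : Fin N, ‖∑ m, (A p m i : ℂ) * w p m‖ < ζ) :
    Λ.sup' hΛ (fun i => ∑ p, ‖∑ m, (A p m i : ℂ) * y p m‖) ≥
      (P : ℝ) * (Λ.sup' hΛ fun k => ‖x k‖) - (P : ℝ) * ζ -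
        ((K : ℝ) - 1) * (∑ p, μ p) * (Λ.sup' hΛ fun k => ‖x k‖) :=
  on_support_correlation_bound_general A Λ hΛ hK x φ w y μ ζ hcols hμ hy hw
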